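/- With Γ as above, for every f in the unit ball of L_p^N: ∫_D Γ(f)(t) dt = σ_1 · S_N(γ∘β∘f), where σ_1 = ∫_D ψ and S_N g = (1/N) Σ_{i<N} g(i); moreover |S_N f − S_N(γ∘β∘f)| ≤ 2^{−m*/2}. Hence the integral of Γ(f) recovers σ_1 times the mean of f up to error σ_1 · 0 + 2^{−m*/2} in the mean, i.e., |σ_1^{−1} ∫_D Γ(f) − S_N f| ≤ 2^{−m*/2}. -/

import Mathlib

/-! Each bump `ψ_v` is `ψ` translated to the corner of its subcube and dilated by `2^k`, so it
still vanishes outside `D` and has integral `σ₁ / N`; linearity then gives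
`∫_D Γ(f) = σ₁ · S_N(γ∘β∘f)`. The unit-ball condition forces `|f_v| ≤ N^{1/p} ≤ 2^{m/2-1}`, and on
that range `γ ∘ β` rounds down to the grid `2^{-m/2} ℤ - 2^{m/2-1}` (the right endpoint, where `β`
saturates, is off by exactly one grid step), so every value, hence the mean, moves by at most
`2^{-m/2}`. -/

open MeasureTheory Real

noncomputable section

/-- The unit cube `D = [0,1]^d`. -/
def cube (d : ℕ) : Set (Fin d → ℝ) := Set.Icc 0 1

/-- `n`-fold partial derivative in direction `i`. -/
def pderivIter (d : ℕ) (i : Fin d) : ℕ → ((Fin d → ℝ) → ℝ) → ((Fin d → ℝ) → ℝ)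
  | 0, f => f
  | n + 1, f => fun x => fderiv ℝ (pderivIter d i n f) x (Pi.single i 1)

/-- Partial derivative `∂^α f` for a multi-index `α`. -/
def mderiv {d : ℕ} (α : Fin d → ℕ) (f : (Fin d → ℝ) → ℝ) : (Fin d → ℝ) → ℝ :=
  (List.finRange d).foldr (fun i g => pderivIter d i (α i) g) f

/-- The Sobolev seminorm `|f|_{r,p,D} = (∑_{|α| = r} ∫_D |∂^α f|^p)^{1/p}`. -/
def sobSemi (d r : ℕ) (p : ℝ) (f : (Fin d → ℝ) → ℝ) : ℝ :=
  (∑ α : Fin d → Fin (r + 1),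
      if (∑ i, (α i : ℕ)) = r then ∫ x in cube d, |mderiv (fun i => (α i : ℕ)) f x| ^ p
      else 0) ^ (1 / p)

/-- The Sobolev norm `‖f‖_{W_p^r(D)} = (∑_{|α| ≤ r} ∫_D |∂^α f|^p)^{1/p}`. -/
def sobNorm (d r : ℕ) (p : ℝ) (f : (Fin d → ℝ) → ℝ) : ℝ :=
  (∑ α : Fin d → Fin (r + 1),
      if (∑ i, (α i : ℕ)) ≤ r then ∫ x in cube d, |mderiv (fun i => (α i : ℕ)) f x| ^ p
      else 0) ^ (1 / p)

/-- The rescaled bump `ψ_v(t) = ψ (2^k (t - s_v))` on the subcube with corner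
`s_v = v / 2^k`. -/
def bump (d k : ℕ) (ψ : (Fin d → ℝ) → ℝ) (v : Fin d → Fin (2 ^ k)) :
    (Fin d → ℝ) → ℝ :=
  fun t => ψ (fun j => 2 ^ k * (t j - (v j : ℝ) / 2 ^ k))

/-- The open unit cube `(0,1)^d`. -/
def openCube (d : ℕ) : Set (Fin d → ℝ) := Set.univ.pi fun _ => Set.Ioo (0 : ℝ) 1

/-- The `m`-bit quantization map `β : ℝ → {0, …, 2^m - 1}`. -/
def quantβ (m : ℕ) (z : ℝ) : ℕ :=
  if z < -(2 : ℝ) ^ ((m : ℝ) / 2 - 1) then 0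
  else if z < (2 : ℝ) ^ ((m : ℝ) / 2 - 1) then
    (⌊(2 : ℝ) ^ ((m : ℝ) / 2) * (z + (2 : ℝ) ^ ((m : ℝ) / 2 - 1))⌋).toNat
  else 2 ^ m - 1

/-- The approximate inverse `γ(y) = 2^{-m/2} y - 2^{m/2 - 1}` of the quantization map. -/
def quantγ (m : ℕ) (y : ℕ) : ℝ :=
  (2 : ℝ) ^ (-(m : ℝ) / 2) * (y : ℝ) - (2 : ℝ) ^ ((m : ℝ) / 2 - 1)

open Finset

section Quantization

lemma two_rpow_half_sub_one (m : ℕ) : (2 : ℝ) ^ ((m : ℝ) / 2 - 1) = 2 ^ ((m : ℝ) / 2) / 2 := by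
  rw [rpow_sub two_pos, rpow_one]

lemma two_rpow_neg_half (m : ℕ) : (2 : ℝ) ^ (-(m : ℝ) / 2) = (2 ^ ((m : ℝ) / 2))⁻¹ := by
  rw [neg_div, rpow_neg zero_le_two]

lemma two_pow_eq_two_rpow_half_sq (m : ℕ) : (2 : ℝ) ^ m = (2 ^ ((m : ℝ) / 2)) ^ 2 := by
  rw [← rpow_mul_natCast zero_le_two, ← rpow_natCast]
  norm_num

lemma quantγ_eq (m y : ℕ) :
    quantγ m y = (2 ^ ((m : ℝ) / 2))⁻¹ * y - 2 ^ ((m : ℝ) / 2) / 2 := by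
  rw [quantγ, two_rpow_neg_half, two_rpow_half_sub_one]

variable {m : ℕ} {z : ℝ}

lemma sub_quantγ_quantβ_of_mem_Ico
    (hz : z ∈ Set.Ico (-(2 : ℝ) ^ ((m : ℝ) / 2 - 1)) (2 ^ ((m : ℝ) / 2 - 1))) :
    z - quantγ m (quantβ m z) =
      (2 : ℝ) ^ (-(m : ℝ) / 2) * Int.fract (2 ^ ((m : ℝ) / 2) * (z + 2 ^ ((m : ℝ) / 2 - 1))) := by
  obtain ⟨hlo, hhi⟩ := hz
  set y := (2 : ℝ) ^ ((m : ℝ) / 2) * (z + 2 ^ ((m : ℝ) / 2 - 1))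
  have hy : 0 ≤ y := mul_nonneg (by positivity) (by linarith)
  have hβ : (quantβ m z : ℝ) = ⌊y⌋ := by
    rw [quantβ, if_neg hlo.not_gt, if_pos hhi]
    exact_mod_cast Int.toNat_of_nonneg (Int.floor_nonneg.mpr hy)
  rw [quantγ_eq, hβ, ← Int.self_sub_floor, two_rpow_neg_half]
  simp only [y, two_rpow_half_sub_one]
  field_simp
  ring

lemma quantγ_quantβ_of_le (hz : (2 : ℝ) ^ ((m : ℝ) / 2 - 1) ≤ z) :
    quantγ m (quantβ m z) = 2 ^ ((m : ℝ) / 2 - 1) - 2 ^ (-(m : ℝ) / 2) := by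
  have hz_not_lt : ¬ z < -(2 : ℝ) ^ ((m : ℝ) / 2 - 1) := by
    have : (0 : ℝ) < 2 ^ ((m : ℝ) / 2 - 1) := by positivity
    linarith
  rw [quantβ, if_neg hz_not_lt, if_neg hz.not_gt, quantγ_eq, Nat.cast_sub Nat.one_le_two_pow,
    Nat.cast_pow, Nat.cast_ofNat, two_pow_eq_two_rpow_half_sq, two_rpow_neg_half,
    two_rpow_half_sub_one]
  field_simp
  ring

theorem abs_sub_quantγ_quantβ_le (hz : |z| ≤ (2 : ℝ) ^ ((m : ℝ) / 2 - 1)) :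
    |z - quantγ m (quantβ m z)| ≤ (2 : ℝ) ^ (-(m : ℝ) / 2) := by
  obtain ⟨hlo, hhi⟩ := abs_le.mp hz
  rcases hhi.lt_or_eq with hlt | rfl
  · rw [sub_quantγ_quantβ_of_mem_Ico ⟨hlo, hlt⟩, abs_of_nonneg (by positivity)]
    exact mul_le_of_le_one_right (by positivity) (Int.fract_lt_one _).le
  · rw [quantγ_quantβ_of_le le_rfl, sub_sub_cancel, abs_of_pos (by positivity)]

end Quantization

section Bumps

variable {d k : ℕ} {ψ : (Fin d → ℝ) → ℝ}

lemma openCube_subset_cube (d : ℕ) : openCube d ⊆ cube d :=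
  fun _ hx => ⟨fun j => (hx j trivial).1.le, fun j => (hx j trivial).2.le⟩

def corner (k : ℕ) (v : Fin d → Fin (2 ^ k)) : Fin d → ℝ := fun j => (v j : ℝ) / 2 ^ k

lemma bump_apply (v : Fin d → Fin (2 ^ k)) (t : Fin d → ℝ) :
    bump d k ψ v t = ψ ((2 : ℝ) ^ k • (t - corner k v)) := rfl

lemma mem_cube_of_smul_sub_corner_mem_openCube {v : Fin d → Fin (2 ^ k)} {t : Fin d → ℝ}
    (ht : (2 : ℝ) ^ k • (t - corner k v) ∈ openCube d) : t ∈ cube d := by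
  have hk : (0 : ℝ) < 2 ^ k := by positivity
  refine ⟨fun j => ?_, fun j => ?_⟩ <;>
  · obtain ⟨hlo, hhi⟩ := ht j trivial
    have hv : (v j : ℝ) + 1 ≤ 2 ^ k := by exact_mod_cast (v j).isLt
    simp only [Pi.smul_apply, Pi.sub_apply, smul_eq_mul, corner, mul_sub,
      mul_div_cancel₀ _ hk.ne'] at hlo hhi
    simp only [Pi.zero_apply, Pi.one_apply]
    nlinarith [Nat.cast_nonneg (α := ℝ) (v j : ℕ)]

lemma bump_eq_zero_of_notMem_cube (hsupp : tsupport ψ ⊆ openCube d) (v : Fin d → Fin (2 ^ k))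
    {t : Fin d → ℝ} (ht : t ∉ cube d) : bump d k ψ v t = 0 :=
  image_eq_zero_of_notMem_tsupport (f := ψ) fun h =>
    ht (mem_cube_of_smul_sub_corner_mem_openCube (hsupp h))

lemma setIntegral_cube_eq_integral (hsupp : tsupport ψ ⊆ openCube d) :
    ∫ x in cube d, ψ x = ∫ x, ψ x :=
  setIntegral_eq_integral_of_forall_compl_eq_zero fun _ hx =>
    image_eq_zero_of_notMem_tsupport fun h => hx (openCube_subset_cube d (hsupp h))

theorem integral_bump (hsupp : tsupport ψ ⊆ openCube d) (v : Fin d → Fin (2 ^ k)) :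
    ∫ x in cube d, bump d k ψ v x = ((2 : ℝ) ^ (d * k))⁻¹ * ∫ x in cube d, ψ x := by
  rw [setIntegral_eq_integral_of_forall_compl_eq_zero fun _ => bump_eq_zero_of_notMem_cube hsupp v,
    setIntegral_cube_eq_integral hsupp]
  simp only [bump_apply]
  rw [integral_sub_right_eq_self (fun x => ψ ((2 : ℝ) ^ k • x)),
    Measure.integral_comp_smul_of_nonneg volume ψ _ (hR := by positivity),
    Module.finrank_fin_fun, smul_eq_mul, ← pow_mul, mul_comm k d]

lemma continuous_bump (hψ : Continuous ψ) (v : Fin d → Fin (2 ^ k)) :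
    Continuous (bump d k ψ v) :=
  hψ.comp (continuous_pi fun j => continuous_const.mul ((continuous_apply j).sub continuous_const))

theorem integral_sum_mul_bump (hψ : Continuous ψ) (hsupp : tsupport ψ ⊆ openCube d)
    (c : (Fin d → Fin (2 ^ k)) → ℝ) :
    ∫ x in cube d, ∑ v, c v * bump d k ψ v x =
      (∫ x in cube d, ψ x) * (((2 : ℝ) ^ (d * k))⁻¹ * ∑ v, c v) := by
  have hint : ∀ v, IntegrableOn (fun x => c v * bump d k ψ v x) (cube d) := fun v =>
    (continuous_const.mul (continuous_bump hψ v)).continuousOn.integrableOn_compact isCompact_Icc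
  rw [integral_finsetSum _ fun v _ => hint v, mul_sum, mul_sum]
  refine sum_congr rfl fun v _ => ?_
  rw [integral_const_mul, integral_bump hsupp]
  ring

end Bumps

section Means

variable {ι : Type*} [Fintype ι]

theorem abs_le_card_rpow_of_lpMean_le_one {p : ℝ} (hp : 0 < p) {f : ι → ℝ}
    (hf : ((Fintype.card ι : ℝ)⁻¹ * ∑ i, |f i| ^ p) ^ (1 / p) ≤ 1) (i : ι) :
    |f i| ≤ (Fintype.card ι : ℝ) ^ (1 / p) := by
  have hcard : (0 : ℝ) < Fintype.card ι := by exact_mod_cast Fintype.card_pos_iff.mpr ⟨i⟩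
  have hmean : (Fintype.card ι : ℝ)⁻¹ * ∑ i, |f i| ^ p ≤ 1 := by
    by_contra! h
    exact hf.not_gt (one_lt_rpow h (by positivity))
  have hsum : |f i| ^ p ≤ Fintype.card ι :=
    (single_le_sum (f := fun j => |f j| ^ p) (fun j _ => by positivity) (mem_univ i)).trans
      (by rwa [inv_mul_le_iff₀ hcard, mul_one] at hmean)
  calc |f i| = (|f i| ^ p) ^ (1 / p) := by
        rw [← rpow_mul (abs_nonneg _), mul_one_div_cancel hp.ne', rpow_one]
    _ ≤ (Fintype.card ι : ℝ) ^ (1 / p) := by gcongr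

theorem abs_mean_sub_mean_le [Nonempty ι] {f g : ι → ℝ} {ε : ℝ} (h : ∀ i, |f i - g i| ≤ ε) :
    |(Fintype.card ι : ℝ)⁻¹ * ∑ i, f i - (Fintype.card ι : ℝ)⁻¹ * ∑ i, g i| ≤ ε := by
  have hcard : (0 : ℝ) < Fintype.card ι := by exact_mod_cast Fintype.card_pos
  calc |(Fintype.card ι : ℝ)⁻¹ * ∑ i, f i - (Fintype.card ι : ℝ)⁻¹ * ∑ i, g i|
      = (Fintype.card ι : ℝ)⁻¹ * |∑ i, (f i - g i)| := by
        rw [← mul_sub, ← sum_sub_distrib, abs_mul, abs_of_pos (inv_pos.mpr hcard)]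
    _ ≤ (Fintype.card ι : ℝ)⁻¹ * ∑ _i : ι, ε := by
        gcongr
        exact (abs_sum_le_sum_abs _ _).trans (sum_le_sum fun i _ => h i)
    _ = ε := by
        rw [sum_const, card_univ, nsmul_eq_mul, inv_mul_cancel_left₀ hcard.ne']

end Means

theorem stmt17_general (d k m : ℕ) (p : ℝ) (hp : 1 ≤ p)
    (hm : ((d * k : ℕ) : ℝ) / p ≤ (m : ℝ) / 2 - 1)
    (ψ : (Fin d → ℝ) → ℝ) (hψ : Continuous ψ)
    (hsupp : tsupport ψ ⊆ openCube d) (hσ : 0 < ∫ x in cube d, ψ x)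
    (f : (Fin d → Fin (2 ^ k)) → ℝ)
    (hf : (((2 : ℝ) ^ (d * k))⁻¹ * ∑ v, |f v| ^ p) ^ (1 / p) ≤ 1) :
    (∫ x in cube d, (∑ v, quantγ m (quantβ m (f v)) * bump d k ψ v x))
        = (∫ x in cube d, ψ x) *
            (((2 : ℝ) ^ (d * k))⁻¹ * ∑ v, quantγ m (quantβ m (f v)))
    ∧ |((2 : ℝ) ^ (d * k))⁻¹ * ∑ v, f v
        - ((2 : ℝ) ^ (d * k))⁻¹ * ∑ v, quantγ m (quantβ m (f v))|
        ≤ (2 : ℝ) ^ (-(m : ℝ) / 2)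
    ∧ |(∫ x in cube d, ψ x)⁻¹ *
          (∫ x in cube d, (∑ v, quantγ m (quantβ m (f v)) * bump d k ψ v x))
        - ((2 : ℝ) ^ (d * k))⁻¹ * ∑ v, f v|
        ≤ (2 : ℝ) ^ (-(m : ℝ) / 2) := by
  have hcard : (Fintype.card (Fin d → Fin (2 ^ k)) : ℝ) = 2 ^ (d * k) := by
    simp [← pow_mul, mul_comm k d]
  have hbound (v : Fin d → Fin (2 ^ k)) : |f v| ≤ (2 : ℝ) ^ ((m : ℝ) / 2 - 1) :=
    calc |f v| ≤ ((2 : ℝ) ^ (d * k)) ^ (1 / p) := by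
          rw [← hcard]
          exact abs_le_card_rpow_of_lpMean_le_one (zero_lt_one.trans_le hp) (by rwa [hcard]) v
      _ = 2 ^ (((d * k : ℕ) : ℝ) / p) := by
          rw [← rpow_natCast, ← rpow_mul zero_le_two, mul_one_div]
      _ ≤ 2 ^ ((m : ℝ) / 2 - 1) := rpow_le_rpow_of_exponent_le one_le_two hm
  have hintegral := integral_sum_mul_bump hψ hsupp fun v => quantγ m (quantβ m (f v))
  have hmean : |((2 : ℝ) ^ (d * k))⁻¹ * ∑ v, f v
      - ((2 : ℝ) ^ (d * k))⁻¹ * ∑ v, quantγ m (quantβ m (f v))| ≤ (2 : ℝ) ^ (-(m : ℝ) / 2) :=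
    hcard ▸ abs_mean_sub_mean_le fun v => abs_sub_quantγ_quantβ_le (hbound v)
  refine ⟨hintegral, hmean, ?_⟩
  rwa [hintegral, inv_mul_cancel_left₀ hσ.ne', abs_sub_comm]

/-- with `Γ(f) = ∑ γ(β(f_v)) ψ_v`, one has
`∫_D Γ(f) = σ₁ ⬝ S_N(γ∘β∘f)`, `|S_N f - S_N(γ∘β∘f)| ≤ 2^{-m*/2}`, and hence
`|σ₁⁻¹ ∫_D Γ(f) - S_N f| ≤ 2^{-m*/2}`, for `f` in the unit ball of `L_p^N`. -/
theorem stmt17 (d k m : ℕ) (p : ℝ) (hd : 0 < d) (hp : 1 ≤ p)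
    (hm : ((d * k : ℕ) : ℝ) / p ≤ (m : ℝ) / 2 - 1)
    (ψ : (Fin d → ℝ) → ℝ) (hψ : Continuous ψ)
    (hsupp : tsupport ψ ⊆ openCube d) (hσ : 0 < ∫ x in cube d, ψ x)
    (f : (Fin d → Fin (2 ^ k)) → ℝ)
    (hf : (((2 : ℝ) ^ (d * k))⁻¹ * ∑ v, |f v| ^ p) ^ (1 / p) ≤ 1) :
    (∫ x in cube d, (∑ v, quantγ m (quantβ m (f v)) * bump d k ψ v x))
        = (∫ x in cube d, ψ x) *
            (((2 : ℝ) ^ (d * k))⁻¹ * ∑ v, quantγ m (quantβ m (f v)))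
    ∧ |((2 : ℝ) ^ (d * k))⁻¹ * ∑ v, f v
        - ((2 : ℝ) ^ (d * k))⁻¹ * ∑ v, quantγ m (quantβ m (f v))|
        ≤ (2 : ℝ) ^ (-(m : ℝ) / 2)
    ∧ |(∫ x in cube d, ψ x)⁻¹ *
          (∫ x in cube d, (∑ v, quantγ m (quantβ m (f v)) * bump d k ψ v x))
        - ((2 : ℝ) ^ (d * k))⁻¹ * ∑ v, f v|
        ≤ (2 : ℝ) ^ (-(m : ℝ) / 2) :=
  stmt17_general d k m p hp hm ψ hψ hsupp hσ f hf
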